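/- For a positive generalized power series Φ in κ[[e^G]] and scalars cᵢ ∈ κ, the differential of the series c₀ + c₁Φ + c₂Φ² + ⋯ equals (c₁ + 2c₂Φ + 3c₃Φ² + ⋯)·dΦ in Ω_{G/H}. -/

import Mathlib

/-- Data exhibiting a totally ordered abelian group `G` as generated freely by a
subgroup `H` and `n` elements `u 0, …, u (n-1)`: every `g ∈ G` is uniquely
`h + Σᵢ sᵢ • uᵢ` with `h ∈ H`; `coord g` records the unique exponents `sᵢ`. -/
structure FreeData (G : Type*) [AddCommGroup G] [LinearOrder G] [IsOrderedAddMonoid G] (n : ℕ) where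
  H : AddSubgroup G
  u : Fin n → G
  coord : G → Fin n → ℤ
  sub_mem : ∀ g : G, g - ∑ i, coord g i • u i ∈ H
  coord_unique : ∀ g : G, ∀ s : Fin n → ℤ, g - ∑ i, s i • u i ∈ H → s = coord g

variable {κ : Type*} [Field κ] {G : Type*} [AddCommGroup G] [LinearOrder G] [IsOrderedAddMonoid G] {n : ℕ}

/-- The partial derivation `∂/∂Xᵢ` with respect to the variable `Xᵢ = e^{uᵢ}`,
defined termwise: it multiplies the term `φ e^h X₁^{j₁} ⋯ Xₙ^{jₙ}` by `jᵢ` and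
decreases the exponent of `Xᵢ` by one. -/
noncomputable def FreeData.pderiv (F : FreeData G n) (i : Fin n) (Φ : HahnSeries G κ) :
    HahnSeries G κ where
  coeff g := (F.coord (g + F.u i) i : κ) * Φ.coeff (g + F.u i)
  isPWO_support' := by
    have hsub : Function.support
        (fun g => (F.coord (g + F.u i) i : κ) * Φ.coeff (g + F.u i)) ⊆
        (fun x => x - F.u i) '' Φ.support := by
      intro g hg
      refine ⟨g + F.u i, ?_, add_sub_cancel_right g (F.u i)⟩
      intro h
      simp [h] at hg
    exact (Φ.isPWO_support.image_of_monotone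
      (fun a b hab => sub_le_sub_right hab _)).mono hsub

/-- The variable `Xᵢ = e^{uᵢ}` associated to free generating data. -/
noncomputable def FreeData.X (F : FreeData G n) (κ : Type*) [Field κ] (i : Fin n) :
    HahnSeries G κ :=
  HahnSeries.single (F.u i) 1

theorem test (F : FreeData G n) (i : Fin n) (Φ : HahnSeries G κ) : F.pderiv i Φ = F.pderiv i Φ := rfl

namespace FreeData

theorem coord_add (F : FreeData G n) (a b : G) :
    F.coord (a + b) = F.coord a + F.coord b := by
  refine (F.coord_unique (a + b) (F.coord a + F.coord b) ?_).symm
  have h : (a + b) - ∑ i, (F.coord a + F.coord b) i • F.u i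
      = (a - ∑ i, F.coord a i • F.u i) + (b - ∑ i, F.coord b i • F.u i) := by
    simp only [Pi.add_apply, add_zsmul, Finset.sum_add_distrib]
    abel
  rw [h]
  exact add_mem (F.sub_mem a) (F.sub_mem b)

theorem coord_zero (F : FreeData G n) : F.coord 0 = 0 := by
  have h := F.coord_add 0 0
  rw [add_zero] at h
  exact (left_eq_add.mp h)

theorem pderiv_coeff (F : FreeData G n) (i : Fin n) (Φ : HahnSeries G κ) (g : G) :
    (F.pderiv i Φ).coeff g = (F.coord (g + F.u i) i : κ) * Φ.coeff (g + F.u i) := rfl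

/-- The "Euler" operator multiplying each term by its `i`-th exponent. -/
noncomputable def emul (F : FreeData G n) (i : Fin n) (Φ : HahnSeries G κ) :
    HahnSeries G κ where
  coeff g := (F.coord g i : κ) * Φ.coeff g
  isPWO_support' := Φ.isPWO_support.mono (fun g hg h => hg (by simp only []; rw [h, mul_zero]))

@[simp] theorem emul_coeff (F : FreeData G n) (i : Fin n) (Φ : HahnSeries G κ) (g : G) :
    (F.emul i Φ).coeff g = (F.coord g i : κ) * Φ.coeff g := rfl

theorem emul_support_subset (F : FreeData G n) (i : Fin n) (Φ : HahnSeries G κ) :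
    (F.emul i Φ).support ⊆ Φ.support := by
  intro g hg
  rw [HahnSeries.mem_support] at hg ⊢
  intro h
  exact hg (by rw [emul_coeff, h, mul_zero])

theorem pderiv_eq (F : FreeData G n) (i : Fin n) (Φ : HahnSeries G κ) :
    F.pderiv i Φ = HahnSeries.single (-(F.u i)) 1 * F.emul i Φ := by
  ext g
  have hg : g = (g + F.u i) + (-(F.u i)) := by abel
  rw [pderiv_coeff]
  conv_rhs => rw [hg]
  rw [HahnSeries.coeff_single_mul_add, one_mul, emul_coeff]

theorem emul_mul (F : FreeData G n) (i : Fin n) (A B : HahnSeries G κ) :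
    F.emul i (A * B) = F.emul i A * B + A * F.emul i B := by
  ext g
  rw [HahnSeries.coeff_add,
    HahnSeries.coeff_mul_left' A.isPWO_support (F.emul_support_subset i A),
    HahnSeries.coeff_mul_right' B.isPWO_support (F.emul_support_subset i B),
    emul_coeff, HahnSeries.coeff_mul, Finset.mul_sum, ← Finset.sum_add_distrib]
  refine Finset.sum_congr rfl fun ij hij => ?_
  obtain ⟨h1, h2, h3⟩ := Finset.mem_addAntidiagonal.mp hij
  have hc : F.coord g i = F.coord ij.1 i + F.coord ij.2 i := by
    rw [← h3, F.coord_add]; rfl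
  rw [emul_coeff, emul_coeff, hc]
  push_cast
  ring

theorem pderiv_mul (F : FreeData G n) (i : Fin n) (A B : HahnSeries G κ) :
    F.pderiv i (A * B) = F.pderiv i A * B + A * F.pderiv i B := by
  simp only [pderiv_eq, emul_mul, mul_add]
  ring

theorem pderiv_one (F : FreeData G n) (i : Fin n) :
    F.pderiv i (1 : HahnSeries G κ) = 0 := by
  ext g
  rw [pderiv_coeff, HahnSeries.coeff_one, HahnSeries.coeff_zero]
  by_cases h : g + F.u i = 0
  · simp [h, F.coord_zero]
  · simp [h]

theorem pderiv_pow (F : FreeData G n) (i : Fin n) (Φ : HahnSeries G κ) (k : ℕ) :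
    F.pderiv i (Φ ^ (k + 1)) = ((k + 1 : ℕ) : κ) • (Φ ^ k * F.pderiv i Φ) := by
  induction k with
  | zero => simp
  | succ k ih =>
    rw [pow_succ', pderiv_mul, ih, Algebra.mul_smul_comm]
    have h1 : Φ * (Φ ^ k * F.pderiv i Φ) = Φ ^ (k + 1) * F.pderiv i Φ := by ring
    have h2 : F.pderiv i Φ * Φ ^ (k + 1) = Φ ^ (k + 1) * F.pderiv i Φ := mul_comm _ _
    rw [h1, h2]
    push_cast
    module

end FreeData

theorem finsum_nat_shift {M : Type*} [AddCommMonoid M] (f : ℕ → M) (h0 : f 0 = 0) :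
    ∑ᶠ i, f i = ∑ᶠ i, f (i + 1) := by
  have hr : Set.range Nat.succ ∩ Function.support f = Set.univ ∩ Function.support f := by
    ext i
    simp only [Set.mem_inter_iff, Set.mem_univ, true_and, Set.mem_range,
      Function.mem_support, and_iff_right_iff_imp]
    intro hi
    have hne : i ≠ 0 := by rintro rfl; exact hi h0
    exact ⟨i - 1, Nat.succ_pred_eq_of_ne_zero hne⟩
  calc ∑ᶠ i, f i = ∑ᶠ i ∈ Set.univ, f i := (finsum_mem_univ f).symm
    _ = ∑ᶠ i ∈ Set.range Nat.succ, f i := by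
        rw [← finsum_mem_inter_support, ← hr, finsum_mem_inter_support]
    _ = ∑ᶠ i, f (i + 1) := finsum_mem_range Nat.succ_injective

namespace HahnSeries.SummableFamily

/-- A family dominated in support by a summable family is summable. -/
def ofLE {α : Type*} (s : HahnSeries.SummableFamily G κ α) (f : α → HahnSeries G κ)
    (hf : ∀ a, (f a).support ⊆ (s a).support) : HahnSeries.SummableFamily G κ α where
  toFun := f
  isPWO_iUnion_support' := s.isPWO_iUnion_support.mono (Set.iUnion_mono hf)
  finite_co_support' g := (s.finite_co_support g).subset (fun a ha => hf a ha)

@[simp] theorem ofLE_toFun {α : Type*} (s : HahnSeries.SummableFamily G κ α)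
    (f : α → HahnSeries G κ) (hf : ∀ a, (f a).support ⊆ (s a).support) (a : α) :
    ofLE s f hf a = f a := rfl

end HahnSeries.SummableFamily

theorem smul_support_le {r : κ} {x : HahnSeries G κ} : (r • x).support ⊆ x.support := by
  intro g hg
  rw [HahnSeries.mem_support] at hg ⊢
  intro h
  exact hg (by rw [HahnSeries.coeff_smul, h, smul_zero])


/-- For a positive generalized power series `Φ` and scalars `cᵢ`, the differential of
`S = c₀ + c₁Φ + c₂Φ² + ⋯` equals `(c₁ + 2c₂Φ + 3c₃Φ² + ⋯) · dΦ` in `Ω_{G/H}`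
(in coordinates: `∂S/∂Xⱼ = T · ∂Φ/∂Xⱼ` for every variable `Xⱼ`, where `T` is the
series `c₁ + 2c₂Φ + 3c₃Φ² + ⋯`). -/
theorem d_of_series_in_positive (F : FreeData G n)
    (Φ : HahnSeries G κ) (hΦ : ∀ h : G, h ≤ 0 → Φ.coeff h = 0)
    (c : ℕ → κ) (S T : HahnSeries G κ)
    (hS : ∀ g : G, S.coeff g = ∑ᶠ i : ℕ, c i * (Φ ^ i).coeff g)
    (hT : ∀ g : G, T.coeff g = ∑ᶠ i : ℕ, ((i + 1 : ℕ) : κ) * c (i + 1) * (Φ ^ i).coeff g) :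
    ∀ j : Fin n, F.pderiv j S = T * F.pderiv j Φ := by
  classical
  have hsupp : Φ.support ⊆ {g : G | 0 < g} := fun g hg =>
    lt_of_not_ge fun h => hg (hΦ g h)
  have hpos : 0 < Φ.orderTop := by
    by_cases h0 : Φ = 0
    · rw [h0, HahnSeries.orderTop_zero]
      exact WithTop.coe_lt_top (0 : G)
    · exact HahnSeries.zero_lt_orderTop_of_order (hsupp (fun h => h0 (HahnSeries.coeff_order_eq_zero.mp h)))
  set P := HahnSeries.SummableFamily.powers Φ with hP
  have hPf : ∀ i : ℕ, P i = Φ ^ i := fun i => HahnSeries.SummableFamily.powers_of_orderTop_pos hpos i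
  set fam1 := HahnSeries.SummableFamily.ofLE P (fun i => c i • Φ ^ i)
    (fun i => by rw [hPf]; exact smul_support_le) with hfam1
  set fam2 := HahnSeries.SummableFamily.ofLE P
    (fun i => (((i + 1 : ℕ) : κ) * c (i + 1)) • Φ ^ i)
    (fun i => by rw [hPf]; exact smul_support_le) with hfam2
  have hSeq : S = fam1.hsum := by
    ext g
    rw [HahnSeries.SummableFamily.coeff_hsum, hS g]
    refine finsum_congr fun i => ?_
    rw [hfam1, HahnSeries.SummableFamily.ofLE_toFun, HahnSeries.coeff_smul, smul_eq_mul]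
  have hTeq : T = fam2.hsum := by
    ext g
    rw [HahnSeries.SummableFamily.coeff_hsum, hT g]
    refine finsum_congr fun i => ?_
    rw [hfam2, HahnSeries.SummableFamily.ofLE_toFun, HahnSeries.coeff_smul, smul_eq_mul]
  intro j
  set D := F.pderiv j Φ with hDdef
  have hTD : T * D = (D • fam2).hsum := by
    rw [HahnSeries.SummableFamily.hsum_smul, hTeq, mul_comm]
  ext g
  rw [hTD, HahnSeries.SummableFamily.coeff_hsum, F.pderiv_coeff, hSeq,
    HahnSeries.SummableFamily.coeff_hsum]
  rw [mul_finsum' _ _ ((fam1.finite_co_support (g + F.u j)).subset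
    (fun i hi => hi))]
  have hL : ∀ i : ℕ, (F.coord (g + F.u j) j : κ) * (fam1 i).coeff (g + F.u j)
      = c i * (F.pderiv j (Φ ^ i)).coeff g := by
    intro i
    rw [hfam1, HahnSeries.SummableFamily.ofLE_toFun, HahnSeries.coeff_smul,
      F.pderiv_coeff, smul_eq_mul]
    ring
  have hR : ∀ i : ℕ, ((D • fam2) i).coeff g = c (i + 1) * (F.pderiv j (Φ ^ (i + 1))).coeff g := by
    intro i
    rw [HahnSeries.SummableFamily.smul_apply, HahnSeries.of_symm_smul_of_eq_mul,
      hfam2, HahnSeries.SummableFamily.ofLE_toFun, F.pderiv_pow,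
      Algebra.mul_smul_comm, HahnSeries.coeff_smul, HahnSeries.coeff_smul,
      smul_eq_mul, smul_eq_mul, mul_comm D (Φ ^ i)]
    ring
  calc ∑ᶠ i : ℕ, (F.coord (g + F.u j) j : κ) * (fam1 i).coeff (g + F.u j)
      = ∑ᶠ i : ℕ, c i * (F.pderiv j (Φ ^ i)).coeff g := finsum_congr hL
    _ = ∑ᶠ i : ℕ, c (i + 1) * (F.pderiv j (Φ ^ (i + 1))).coeff g := by
        refine finsum_nat_shift _ ?_
        rw [pow_zero, F.pderiv_one, HahnSeries.coeff_zero, mul_zero]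
    _ = ∑ᶠ i : ℕ, ((D • fam2) i).coeff g := (finsum_congr hR).symm
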